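/- arXiv:1805.03744 — 8 statements merged into one kernel-verified Lean document; each statement's English description precedes it below -/
import Mathlib

section
/- Under cluster randomization (the treated set is a uniformly random subset S of the J clusters with |S| = m, 0 < m < J), monotonicity, the exclusion restriction, and n_CO,j ≥ 1 for every cluster j, the cluster-level (Wald) estimator identifies a weighted average of cluster-level CACEs: E[D̄_T − D̄_C] = (1/J)·Σ_{j=1}^J n_CO,j/n_j > 0 and E[Ȳ_T − Ȳ_C] / E[D̄_T − D̄_C] = Σ_{j=1}^J w_CL,j · τ_j, where w_CL,j = (n_CO,j/n_j) / (Σ_{l=1}^J n_CO,l/n_l). -/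
/-!
Under complete randomization of `m` of the `J` clusters, a cluster is treated with probability
`m / J`, so the difference between the mean of treated and of control cluster means is
unbiased for the average over clusters of the within-cluster intention-to-treat effects. By
monotonicity and the exclusion restriction only compliers change treatment when a cluster is
assigned, so within cluster `j` the effect on take-up is the complier share `n_CO,j / n_j` and
the effect on the outcome is `(n_CO,j / n_j) τ_j`. The Wald ratio of the two averages is then
the average of the `τ_j` weighted by the complier shares.
-/

open Finset

/-- Average of `f` over all size-`m` treated subsets of the `J` clusters
(uniform cluster randomization). -/
noncomputable def clExpect (J m : ℕ) (f : Finset (Fin J) → ℝ) : ℝ :=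
  (∑ s ∈ (univ : Finset (Finset (Fin J))).filter (fun s => s.card = m), f s) / (J.choose m)

section Combinatorics

variable {α : Type*} [Fintype α] [DecidableEq α]

lemma card_filter_card_eq_and_notMem (m : ℕ) (a : α) :
    #{s ∈ (univ : Finset (Finset α)) | s.card = m ∧ a ∉ s} =
      (Fintype.card α - 1).choose m := by
  have hfilter : {s ∈ (univ : Finset (Finset α)) | s.card = m ∧ a ∉ s} =
      (univ.erase a).powersetCard m := by
    ext s
    simp [mem_powersetCard, subset_erase, and_comm]
  rw [hfilter, card_powersetCard, card_erase_of_mem (mem_univ a), card_univ]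

lemma sum_filter_card_eq_sum_compl {M : Type*} [AddCommMonoid M] (m : ℕ) (b : α → M) :
    ∑ s ∈ (univ : Finset (Finset α)).filter (fun s => s.card = m), ∑ j ∈ sᶜ, b j =
      (Fintype.card α - 1).choose m • ∑ j, b j := by
  have h (s : Finset α) : ∑ j ∈ sᶜ, b j = ∑ j, if j ∈ sᶜ then b j else 0 := by
    rw [sum_ite_mem, univ_inter]
  simp_rw [h]
  rw [sum_comm, smul_sum]
  refine sum_congr rfl fun j _ => ?_
  rw [← sum_filter, sum_const, filter_filter, ← card_filter_card_eq_and_notMem m j]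
  simp only [mem_compl]

end Combinatorics

section Expectation

variable {J m : ℕ}

lemma clExpect_sub (f g : Finset (Fin J) → ℝ) :
    clExpect J m (fun s => f s - g s) = clExpect J m f - clExpect J m g := by
  simp only [clExpect, sum_sub_distrib, sub_div]

lemma clExpect_div_const (f : Finset (Fin J) → ℝ) (c : ℝ) :
    clExpect J m (fun s => f s / c) = clExpect J m f / c := by
  simp only [clExpect, ← sum_div, div_right_comm]

lemma clExpect_const (hmJ : m ≤ J) (c : ℝ) : clExpect J m (fun _ => c) = c := by
  have hchoose : (J.choose m : ℝ) ≠ 0 := by exact_mod_cast (Nat.choose_pos hmJ).ne'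
  simp [clExpect, hchoose]

lemma clExpect_sum_compl (hmJ : m < J) (b : Fin J → ℝ) :
    clExpect J m (fun s => ∑ j ∈ sᶜ, b j) = ((J - m) / J : ℝ) * ∑ j, b j := by
  have hchoose : (J.choose m : ℝ) ≠ 0 := by exact_mod_cast (Nat.choose_pos hmJ.le).ne'
  have hJ : (J : ℝ) ≠ 0 := by exact_mod_cast (Nat.zero_lt_of_lt hmJ).ne'
  have hpascal : ((J - 1).choose m : ℝ) * J = J.choose m * (J - m) := by
    have h := Nat.choose_mul_succ_eq (J - 1) m
    rw [Nat.sub_add_cancel (Nat.one_le_of_lt hmJ)] at h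
    rw [← Nat.cast_sub hmJ.le]
    exact_mod_cast h
  rw [clExpect, sum_filter_card_eq_sum_compl, Fintype.card_fin, nsmul_eq_mul]
  field_simp
  linear_combination (∑ j, b j) * hpascal

lemma clExpect_sum_mem (hmJ : m < J) (a : Fin J → ℝ) :
    clExpect J m (fun s => ∑ j ∈ s, a j) = (m / J : ℝ) * ∑ j, a j := by
  have hJ : (J : ℝ) ≠ 0 := by exact_mod_cast (Nat.zero_lt_of_lt hmJ).ne'
  have h : (fun s : Finset (Fin J) => ∑ j ∈ s, a j) =
      fun s => ∑ j, a j - ∑ j ∈ sᶜ, a j :=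
    funext fun s => eq_sub_of_add_eq (sum_add_sum_compl s a)
  rw [h, clExpect_sub, clExpect_const hmJ.le, clExpect_sum_compl hmJ]
  field_simp
  ring

theorem clExpect_diffInMeans (hm0 : 0 < m) (hmJ : m < J) (a b : Fin J → ℝ)
    (X : Finset (Fin J) → Fin J → ℝ) (hX : ∀ s j, X s j = if j ∈ s then a j else b j) :
    clExpect J m (fun s => (∑ j ∈ s, X s j) / m - (∑ j ∈ sᶜ, X s j) / ((J : ℝ) - m)) =
      (1 / (J : ℝ)) * ∑ j, (a j - b j) := by
  have hm : (m : ℝ) ≠ 0 := by exact_mod_cast hm0.ne'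
  have hJm : (J : ℝ) - m ≠ 0 := sub_ne_zero.2 (by exact_mod_cast hmJ.ne')
  have hT (s : Finset (Fin J)) : ∑ j ∈ s, X s j = ∑ j ∈ s, a j :=
    sum_congr rfl fun j hj => by rw [hX, if_pos hj]
  have hC (s : Finset (Fin J)) : ∑ j ∈ sᶜ, X s j = ∑ j ∈ sᶜ, b j :=
    sum_congr rfl fun j hj => by rw [hX, if_neg (mem_compl.1 hj)]
  simp only [hT, hC]
  rw [clExpect_sub, clExpect_div_const, clExpect_div_const, clExpect_sum_mem hmJ,
    clExpect_sum_compl hmJ, sum_sub_distrib]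
  field_simp

end Expectation

lemma sum_sub_sum_eq_sum_compliers {ι M : Type*} [Fintype ι] [AddCommGroup M]
    (d1 d0 : ι → Bool) (mono : ∀ i, d0 i = true → d1 i = true) (g : ι → Bool → M) :
    ∑ i, g i (d1 i) - ∑ i, g i (d0 i) =
      ∑ i ∈ univ.filter (fun i => d1 i = true ∧ d0 i = false), (g i true - g i false) := by
  rw [← sum_sub_distrib, sum_filter]
  refine sum_congr rfl fun i _ => ?_
  cases h1 : d1 i <;> cases h0 : d0 i <;> simp_all

/-- Under cluster randomization, monotonicity, the exclusion restriction (outcomes depend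
only on treatment received), and at least one complier per cluster, the cluster-level (Wald)
estimator identifies `Σ_j w_CL,j τ_j`, with `E[D̄_T − D̄_C] = (1/J) Σ_j n_CO,j/n_j > 0`. -/
theorem stmt0
    (J m : ℕ) (hm0 : 0 < m) (hmJ : m < J)
    (n : Fin J → ℕ) (hn : ∀ j, 1 ≤ n j)
    -- potential compliances and potential outcomes (exclusion restriction:
    -- outcomes depend only on the treatment received)
    (D1 D0 : (j : Fin J) → Fin (n j) → Bool)
    (Y : (j : Fin J) → Fin (n j) → Bool → ℝ)
    -- monotonicity: no defiers
    (mono : ∀ j i, D0 j i = true → D1 j i = true)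
    -- number of compliers per cluster, at least one in each cluster
    (nCO : Fin J → ℕ)
    (hnCO : ∀ j, nCO j =
      (univ.filter (fun i => D1 j i = true ∧ D0 j i = false)).card)
    (hnCO1 : ∀ j, 1 ≤ nCO j)
    -- cluster-level CACEs
    (τ : Fin J → ℝ)
    (hτ : ∀ j, τ j =
      (∑ i ∈ univ.filter (fun i => D1 j i = true ∧ D0 j i = false),
        (Y j i true - Y j i false)) / nCO j)
    -- observed cluster means under assignment s
    (Ybar Dbar : Finset (Fin J) → Fin J → ℝ)
    (hYbar : ∀ s j, Ybar s j =
      (∑ i, Y j i (if j ∈ s then D1 j i else D0 j i)) / n j)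
    (hDbar : ∀ s j, Dbar s j =
      (∑ i, (if (if j ∈ s then D1 j i else D0 j i) then (1 : ℝ) else 0)) / n j)
    (YT YC DT DC : Finset (Fin J) → ℝ)
    (hYT : ∀ s, YT s = (∑ j ∈ s, Ybar s j) / m)
    (hYC : ∀ s, YC s = (∑ j ∈ sᶜ, Ybar s j) / ((J : ℝ) - m))
    (hDT : ∀ s, DT s = (∑ j ∈ s, Dbar s j) / m)
    (hDC : ∀ s, DC s = (∑ j ∈ sᶜ, Dbar s j) / ((J : ℝ) - m)) :
    clExpect J m (fun s => DT s - DC s) = (1 / (J : ℝ)) * ∑ j, (nCO j : ℝ) / n j ∧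
    0 < clExpect J m (fun s => DT s - DC s) ∧
    clExpect J m (fun s => YT s - YC s) / clExpect J m (fun s => DT s - DC s) =
      ∑ j, (((nCO j : ℝ) / n j) / (∑ l, (nCO l : ℝ) / n l)) * τ j := by
  have hJ : (0 : ℝ) < J := by exact_mod_cast hm0.trans hmJ
  have hED : clExpect J m (fun s => DT s - DC s) =
      (1 / (J : ℝ)) * ∑ j, (nCO j : ℝ) / n j := by
    simp only [hDT, hDC]
    rw [clExpect_diffInMeans hm0 hmJ (fun j => (∑ i, if D1 j i then (1 : ℝ) else 0) / n j)
      (fun j => (∑ i, if D0 j i then (1 : ℝ) else 0) / n j) Dbar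
      (fun s j => by rw [hDbar]; split_ifs <;> rfl)]
    refine congrArg _ (sum_congr rfl fun j _ => ?_)
    rw [div_sub_div_same, sum_sub_sum_eq_sum_compliers _ _ (mono j) (fun _ b => if b then 1 else 0)]
    simp [hnCO j]
  have hEY : clExpect J m (fun s => YT s - YC s) =
      (1 / (J : ℝ)) * ∑ j, (nCO j : ℝ) / n j * τ j := by
    simp only [hYT, hYC]
    rw [clExpect_diffInMeans hm0 hmJ (fun j => (∑ i, Y j i (D1 j i)) / n j)
      (fun j => (∑ i, Y j i (D0 j i)) / n j) Ybar (fun s j => by rw [hYbar]; split_ifs <;> rfl)]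
    refine congrArg _ (sum_congr rfl fun j _ => ?_)
    have hnCO0 : (nCO j : ℝ) ≠ 0 := by have := hnCO1 j; positivity
    rw [div_sub_div_same, sum_sub_sum_eq_sum_compliers _ _ (mono j) (Y j), hτ j]
    field_simp
  have hS : 0 < ∑ j, (nCO j : ℝ) / n j :=
    sum_pos (fun j _ => by have := hnCO1 j; have := hn j; positivity)
      (univ_nonempty_iff.2 ⟨⟨0, hm0.trans hmJ⟩⟩)
  refine ⟨hED, hED ▸ by positivity, ?_⟩
  rw [hED, hEY, mul_div_mul_left _ _ (by positivity), sum_div]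
  exact sum_congr rfl fun j _ => div_mul_eq_mul_div _ _ _ |>.symm
end

section
/- Under cluster randomization (uniformly random treated subset of size m, 0 < m < J, J ≥ 2), monotonicity, the exclusion restriction, and n_CO,j ≥ 1 for every cluster j, the two-stage least squares estimator identifies a weighted average of cluster-level CACEs: E[ Σ_j (1−Z_j)n_j · Σ_j Z_j Y_j − Σ_j Z_j n_j · Σ_j (1−Z_j)Y_j ] / E[ Σ_j (1−Z_j)n_j · Σ_j Z_j D_j − Σ_j Z_j n_j · Σ_j (1−Z_j)D_j ] = Σ_{j=1}^J w_TSLS,j · τ_j, where n = Σ_j n_j and w_TSLS,j = n_CO,j(n − n_j) / (Σ_{l=1}^J n_CO,l(n − n_l)); moreover the denominator expectation equals (m(J−m)/(J(J−1)))·Σ_j n_CO,j (n − n_j) > 0. -/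
open Finset

/-! Numerator and denominator are both contrasts
`(∑_{k ∉ s} w k) (∑_{j ∈ s} f j) - (∑_{j ∈ s} w j) (∑_{k ∉ s} g k)`, i.e. sums over the
ordered pairs `(j, k)` with `j` treated and `k` not. Each ordered pair of distinct clusters is
split this way by `C(J-2, m-1)` of the `C(J, m)` assignments, a fraction `m(J-m)/(J(J-1))`, so
the expected contrast is that factor times `∑_j (f j - g j)(n - n_j)`. By monotonicity and the
exclusion restriction, `f j - g j` is `n_CO,j` for compliance totals and `n_CO,j τ_j` for
outcome totals; the common factor cancels in the ratio. -/

theorem cast_choose_sub_two_div_choose {J m : ℕ} (hJ : 2 ≤ J) (hm : 1 ≤ m) (hmJ : m ≤ J) :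
    ((J - 2).choose (m - 1) : ℝ) / J.choose m = m * (J - m) / (J * (J - 1)) := by
  obtain ⟨J, rfl⟩ := Nat.exists_eq_add_of_le' hJ
  obtain ⟨m, rfl⟩ := Nat.exists_eq_add_of_le' hm
  have hchoose : (J.choose m * (J + 1) * (J + 2) : ℕ)
      = (J + 2).choose (m + 1) * (m + 1) * (J + 1 - m) := by
    rw [Nat.choose_mul_succ_eq, mul_right_comm, mul_comm _ (J + 2), ← Nat.add_one_mul_choose_eq]
  have hpos : (0 : ℝ) < (J + 2).choose (m + 1) := by exact_mod_cast Nat.choose_pos hmJ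
  rw [div_eq_div_iff hpos.ne' (by push_cast; nlinarith)]
  simp only [Nat.add_sub_cancel]
  have hcast := congrArg (Nat.cast : ℕ → ℝ) hchoose
  push_cast [Nat.cast_sub (show m ≤ J + 1 by omega)] at hcast ⊢
  linear_combination hcast

section Finset

variable {α : Type*} [Fintype α] [DecidableEq α]

theorem card_filter_mem_notMem_powersetCard_univ {m : ℕ} (hm : 1 ≤ m) {j k : α}
    (hjk : j ≠ k) :
    #{s ∈ powersetCard m (univ : Finset α) | j ∈ s ∧ k ∉ s}
      = (Fintype.card α - 2).choose (m - 1) := by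
  have hfilter : {s ∈ powersetCard m (univ : Finset α) | j ∈ s ∧ k ∉ s}
      = {s ∈ powersetCard m (univ.erase k) | {j} ⊆ s} := by
    ext s
    simp only [mem_filter, mem_powersetCard, subset_univ, true_and, singleton_subset_iff,
      subset_erase]
    tauto
  rw [hfilter, card_filter_powersetCard_subset _ _ _ (by simpa using hjk) (by simpa using hm),
    card_erase_of_mem (mem_univ k), card_univ, card_singleton, Nat.sub_sub]

theorem sum_powersetCard_sum_mem_sum_notMem {m : ℕ} (hm : 1 ≤ m) (h : α → α → ℝ) :
    ∑ s ∈ powersetCard m univ, ∑ j ∈ s, ∑ k ∈ sᶜ, h j k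
      = (Fintype.card α - 2).choose (m - 1) * ∑ j, ∑ k ∈ univ.erase j, h j k := by
  have hind : ∀ s : Finset α, ∑ j ∈ s, ∑ k ∈ sᶜ, h j k
      = ∑ j, ∑ k, if j ∈ s ∧ k ∉ s then h j k else 0 := fun s => by
    simp only [ite_and, ← mem_compl, sum_ite_irrel, sum_const_zero, sum_ite_mem, univ_inter]
  have hcount : ∀ j k, ∑ s ∈ powersetCard m univ, (if j ∈ s ∧ k ∉ s then h j k else 0)
      = #{s ∈ powersetCard m univ | j ∈ s ∧ k ∉ s} * h j k := fun j k => by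
    rw [← sum_filter, sum_const, nsmul_eq_mul]
  rw [sum_congr rfl fun s _ => hind s, sum_comm, mul_sum]
  refine sum_congr rfl fun j _ => ?_
  rw [sum_comm, mul_sum, ← sum_erase univ (a := j) (by simp)]
  refine sum_congr rfl fun k hk => ?_
  rw [hcount, card_filter_mem_notMem_powersetCard_univ hm (ne_of_mem_erase hk).symm]

/-- The TSLS contrast at assignment `s`, when a treated cluster `j` reports the total `f j`, a
control cluster reports `g j`, and `w` are the cluster sizes. -/
def tslsContrast (w f g : α → ℝ) (s : Finset α) : ℝ :=
  (∑ j ∈ sᶜ, w j) * (∑ j ∈ s, f j) - (∑ j ∈ s, w j) * (∑ j ∈ sᶜ, g j)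

theorem tslsContrast_eq_sum_sum (w f g : α → ℝ) (s : Finset α) :
    tslsContrast w f g s = ∑ j ∈ s, ∑ k ∈ sᶜ, (w k * f j - w j * g k) := by
  rw [tslsContrast, sum_mul_sum, sum_mul_sum, sum_comm (s := sᶜ) (t := s), ← sum_sub_distrib]
  exact sum_congr rfl fun j _ => by rw [← sum_sub_distrib]

theorem sum_sum_erase_cross (w f g : α → ℝ) :
    ∑ j, ∑ k ∈ univ.erase j, (w k * f j - w j * g k)
      = ∑ j, (f j - g j) * (∑ l, w l - w j) := by
  have hrow : ∀ j, ∑ k ∈ univ.erase j, (w k * f j - w j * g k)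
      = (∑ l, w l - w j) * f j - w j * (∑ l, g l - g j) := fun j => by
    rw [sum_sub_distrib, ← sum_mul, ← mul_sum, sum_erase_eq_sub (mem_univ j),
      sum_erase_eq_sub (mem_univ j)]
  simp only [hrow, mul_sub, sum_sub_distrib, ← sum_mul, mul_comm]
  ring

end Finset

theorem clExpect_tslsContrast {J m : ℕ} (hJ : 2 ≤ J) (hm : 1 ≤ m) (hmJ : m ≤ J)
    (w f g : Fin J → ℝ) :
    clExpect J m (tslsContrast w f g)
      = m * (J - m) / (J * (J - 1)) * ∑ j, (f j - g j) * (∑ l, w l - w j) := by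
  rw [clExpect, univ_filter_card_eq]
  simp only [tslsContrast_eq_sum_sum]
  rw [sum_powersetCard_sum_mem_sum_notMem hm, Fintype.card_fin, sum_sum_erase_cross,
    mul_div_right_comm, cast_choose_sub_two_div_choose hJ hm hmJ]

theorem clExpect_of_eq_ite {J m : ℕ} (hJ : 2 ≤ J) (hm : 1 ≤ m) (hmJ : m ≤ J)
    {w f g : Fin J → ℝ} {x : Finset (Fin J) → Fin J → ℝ} {F : Finset (Fin J) → ℝ}
    (hx : ∀ s j, x s j = if j ∈ s then f j else g j)
    (hF : ∀ s, F s = (∑ j ∈ sᶜ, w j) * (∑ j ∈ s, x s j) - (∑ j ∈ s, w j) * (∑ j ∈ sᶜ, x s j)) :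
    clExpect J m F = m * (J - m) / (J * (J - 1)) * ∑ j, (f j - g j) * (∑ l, w l - w j) := by
  have hF' : F = tslsContrast w f g := funext fun s => by
    rw [hF, tslsContrast, sum_congr rfl fun j hj => (hx s j).trans (if_pos hj),
      sum_congr rfl fun j hj => (hx s j).trans (if_neg (mem_compl.mp hj))]
  rw [hF', clExpect_tslsContrast hJ hm hmJ]

theorem apply_sub_apply_eq_ite {d₀ d₁ : Bool} (h : d₀ = true → d₁ = true) (y : Bool → ℝ) :
    y d₁ - y d₀ = if d₁ = true ∧ d₀ = false then y true - y false else 0 := by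
  cases d₀ <;> cases d₁ <;> simp_all

section Cluster

variable {ι : Type*} [Fintype ι] {D₁ D₀ : ι → Bool}

theorem sum_apply_sub_sum_apply (mono : ∀ i, D₀ i = true → D₁ i = true) (y : ι → Bool → ℝ) :
    ∑ i, y i (D₁ i) - ∑ i, y i (D₀ i)
      = ∑ i ∈ univ.filter (fun i => D₁ i = true ∧ D₀ i = false), (y i true - y i false) := by
  rw [← sum_sub_distrib, sum_filter]
  exact sum_congr rfl fun i _ => apply_sub_apply_eq_ite (mono i) (y i)

theorem sum_boole_sub_sum_boole (mono : ∀ i, D₀ i = true → D₁ i = true) :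
    ∑ i, (if D₁ i then (1 : ℝ) else 0) - ∑ i, (if D₀ i then (1 : ℝ) else 0)
      = #(univ.filter (fun i => D₁ i = true ∧ D₀ i = false)) := by
  rw [sum_apply_sub_sum_apply mono fun _ b => if b then (1 : ℝ) else 0]
  simp

end Cluster

theorem lt_sum_of_one_le {ι : Type*} [Fintype ι] [Nontrivial ι] {n : ι → ℕ}
    (hn : ∀ k, 1 ≤ n k) (j : ι) : n j < ∑ k, n k := by
  obtain ⟨k, hk⟩ := exists_ne j
  exact single_lt_sum hk (mem_univ j) (mem_univ k) (hn k) (by simp)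

/-- Under cluster randomization (J ≥ 2), monotonicity, the exclusion restriction, and at
least one complier per cluster, TSLS identifies `Σ_j w_TSLS,j τ_j`, where
`w_TSLS,j = n_CO,j(n − n_j)/Σ_l n_CO,l(n − n_l)`; the denominator expectation equals
`(m(J−m)/(J(J−1))) Σ_j n_CO,j (n − n_j) > 0`. -/
theorem stmt1
    (J m : ℕ) (hJ2 : 2 ≤ J) (hm0 : 0 < m) (hmJ : m < J)
    (n : Fin J → ℕ) (hn : ∀ j, 1 ≤ n j)
    -- potential compliances and potential outcomes (exclusion restriction:
    -- outcomes depend only on the treatment received)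
    (D1 D0 : (j : Fin J) → Fin (n j) → Bool)
    (Y : (j : Fin J) → Fin (n j) → Bool → ℝ)
    -- monotonicity: no defiers
    (mono : ∀ j i, D0 j i = true → D1 j i = true)
    -- number of compliers per cluster, at least one in each cluster
    (nCO : Fin J → ℕ)
    (hnCO : ∀ j, nCO j =
      (univ.filter (fun i => D1 j i = true ∧ D0 j i = false)).card)
    (hnCO1 : ∀ j, 1 ≤ nCO j)
    -- cluster-level CACEs
    (τ : Fin J → ℝ)
    (hτ : ∀ j, τ j =
      (∑ i ∈ univ.filter (fun i => D1 j i = true ∧ D0 j i = false),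
        (Y j i true - Y j i false)) / nCO j)
    -- observed cluster totals under assignment s
    (Yt Dt : Finset (Fin J) → Fin J → ℝ)
    (hYt : ∀ s j, Yt s j = ∑ i, Y j i (if j ∈ s then D1 j i else D0 j i))
    (hDt : ∀ s j, Dt s j =
      ∑ i, (if (if j ∈ s then D1 j i else D0 j i) then (1 : ℝ) else 0))
    -- total number of units
    (N : ℕ) (hN : N = ∑ j, n j)
    -- TSLS numerator and denominator
    (num den : Finset (Fin J) → ℝ)
    (hnum : ∀ s, num s = (∑ j ∈ sᶜ, (n j : ℝ)) * (∑ j ∈ s, Yt s j)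
                      - (∑ j ∈ s, (n j : ℝ)) * (∑ j ∈ sᶜ, Yt s j))
    (hden : ∀ s, den s = (∑ j ∈ sᶜ, (n j : ℝ)) * (∑ j ∈ s, Dt s j)
                      - (∑ j ∈ s, (n j : ℝ)) * (∑ j ∈ sᶜ, Dt s j)) :
    clExpect J m den =
      ((m : ℝ) * ((J : ℝ) - m) / ((J : ℝ) * ((J : ℝ) - 1))) *
        ∑ j, (nCO j : ℝ) * ((N : ℝ) - n j) ∧
    0 < clExpect J m den ∧
    clExpect J m num / clExpect J m den =
      ∑ j, ((nCO j : ℝ) * ((N : ℝ) - n j) / (∑ l, (nCO l : ℝ) * ((N : ℝ) - n l))) * τ j := by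
  set c : ℝ := m * (J - m) / (J * (J - 1)) with hc_def
  have hNsum : (N : ℝ) = ∑ l, (n l : ℝ) := by rw [hN, Nat.cast_sum]
  have hden' : clExpect J m den = c * ∑ j, (nCO j : ℝ) * (N - n j) := by
    rw [clExpect_of_eq_ite hJ2 hm0 hmJ.le (fun s j => (hDt s j).trans (by split_ifs <;> rfl)) hden,
      ← hc_def, hNsum]
    simp only [sum_boole_sub_sum_boole (mono _), hnCO]
  have hnum' : clExpect J m num = c * ∑ j, (nCO j : ℝ) * (N - n j) * τ j := by
    rw [clExpect_of_eq_ite hJ2 hm0 hmJ.le (fun s j => (hYt s j).trans (by split_ifs <;> rfl)) hnum,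
      ← hc_def, hNsum]
    refine congrArg (c * ·) (sum_congr rfl fun j _ => ?_)
    have hnCO0 : (nCO j : ℝ) ≠ 0 := Nat.cast_ne_zero.mpr (Nat.one_le_iff_ne_zero.mp (hnCO1 j))
    rw [sum_apply_sub_sum_apply (mono j), hτ j]
    field_simp
  have hc : 0 < c := by
    have h1 : (0 : ℝ) < m := by exact_mod_cast hm0
    have h2 : (m : ℝ) < J := by exact_mod_cast hmJ
    have h3 : (2 : ℝ) ≤ J := by exact_mod_cast hJ2
    exact div_pos (by nlinarith) (by nlinarith)
  have hW : 0 < ∑ j, (nCO j : ℝ) * (N - n j) := by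
    have : Nontrivial (Fin J) := Fin.nontrivial_iff_two_le.mpr hJ2
    refine sum_pos (fun j _ => mul_pos (by exact_mod_cast hnCO1 j) (sub_pos.mpr ?_)) univ_nonempty
    exact_mod_cast hN ▸ lt_sum_of_one_le hn j
  refine ⟨hden', hden' ▸ mul_pos hc hW, ?_⟩
  rw [hnum', hden', mul_div_mul_left _ _ hc.ne', sum_div]
  exact sum_congr rfl fun j _ => by ring
end

section
/- The bias of the cluster-level identified value admits the exact pairwise decomposition: τ_CL − τ = [ Σ_{1 ≤ j < l ≤ J} (n_CO,j n_CO,l / (n_j n_l)) (n_l − n_j)(τ_j − τ_l) ] / [ (Σ_{l=1}^J n_CO,l/n_l) · (Σ_{l=1}^J n_CO,l) ]. -/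
open Finset

/-- Antisymmetrization: a full double sum with vanishing diagonal equals the sum
over ordered pairs of symmetrized terms. -/
lemma pair_sum {J : ℕ} (h : Fin J → Fin J → ℝ) (hd : ∀ j, h j j = 0) :
    ∑ j, ∑ l, h j l =
      ∑ j, ∑ l ∈ univ.filter (fun l => j < l), (h j l + h l j) := by
  have hdiag : ∀ j : Fin J, (univ.filter (fun l => ¬ j < l))
      = insert j (univ.filter (fun l => l < j)) := by
    intro j
    ext l
    simp only [mem_filter, mem_univ, true_and, mem_insert, not_lt, le_iff_lt_or_eq]
    tauto
  have swap : ∑ j, ∑ l ∈ univ.filter (fun l => l < j), h j l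
      = ∑ j, ∑ l ∈ univ.filter (fun l => j < l), h l j := by
    refine Finset.sum_comm' ?_
    intro x y
    simp only [mem_filter, mem_univ, true_and]
    tauto
  calc ∑ j, ∑ l, h j l
      = ∑ j, ((∑ l ∈ univ.filter (fun l => j < l), h j l)
          + ∑ l ∈ univ.filter (fun l => l < j), h j l) := by
        refine Finset.sum_congr rfl fun j _ => ?_
        rw [← Finset.sum_filter_add_sum_filter_not univ (fun l => j < l) (h j), hdiag j,
          Finset.sum_insert (by simp), hd, zero_add]
    _ = (∑ j, ∑ l ∈ univ.filter (fun l => j < l), h j l)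
          + ∑ j, ∑ l ∈ univ.filter (fun l => l < j), h j l := Finset.sum_add_distrib
    _ = ∑ j, ∑ l ∈ univ.filter (fun l => j < l), (h j l + h l j) := by
        rw [swap, ← Finset.sum_add_distrib]
        exact Finset.sum_congr rfl fun j _ => (Finset.sum_add_distrib).symm

/-- Exact pairwise decomposition of the bias of the cluster-level identified value:
`τ_CL − τ = [Σ_{j<l} (n_CO,j n_CO,l/(n_j n_l))(n_l − n_j)(τ_j − τ_l)] /
[(Σ_l n_CO,l/n_l)(Σ_l n_CO,l)]`. -/
theorem stmt4
    (J : ℕ) (hJ : 2 ≤ J)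
    (n nCO : Fin J → ℕ) (hn : ∀ j, 1 ≤ n j) (hCO : ∀ j, 1 ≤ nCO j)
    (τc : Fin J → ℝ)
    (τ τCL : ℝ)
    (hτ : τ = (∑ j, (nCO j : ℝ) * τc j) / (∑ j, (nCO j : ℝ)))
    (hτCL : τCL = (∑ j, ((nCO j : ℝ) / n j) * τc j) / (∑ j, (nCO j : ℝ) / n j)) :
    τCL - τ =
      (∑ j, ∑ l ∈ univ.filter (fun l => j < l),
          ((nCO j : ℝ) * nCO l / ((n j : ℝ) * n l)) * ((n l : ℝ) - n j) * (τc j - τc l)) /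
        ((∑ l, (nCO l : ℝ) / n l) * (∑ l, (nCO l : ℝ))) := by
  have hne : Nonempty (Fin J) := ⟨⟨0, by omega⟩⟩
  have hn0 : ∀ j, (n j : ℝ) ≠ 0 := fun j => by
    have := hn j; positivity
  have hA : 0 < ∑ l, (nCO l : ℝ) / n l := by
    apply Finset.sum_pos
    · intro l _
      have h1 := hCO l
      have h2 := hn l
      positivity
    · exact univ_nonempty
  have hB : 0 < ∑ l, (nCO l : ℝ) := by
    apply Finset.sum_pos
    · intro l _
      have h1 := hCO l
      positivity
    · exact univ_nonempty
  rw [hτ, hτCL, div_sub_div _ _ hA.ne' hB.ne']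
  congr 1
  calc (∑ j, ((nCO j : ℝ) / n j) * τc j) * (∑ l, (nCO l : ℝ))
        - (∑ l, (nCO l : ℝ) / n l) * (∑ j, (nCO j : ℝ) * τc j)
      = ∑ j, (((nCO j : ℝ) / n j) * τc j * (∑ l, (nCO l : ℝ))
          - (∑ l, (nCO l : ℝ) / n l) * ((nCO j : ℝ) * τc j)) := by
        rw [Finset.sum_mul, Finset.mul_sum, ← Finset.sum_sub_distrib]
    _ = ∑ j, ∑ l, (((nCO j : ℝ) / n j) * τc j * (nCO l : ℝ)
          - ((nCO l : ℝ) / n l) * ((nCO j : ℝ) * τc j)) := by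
        refine Finset.sum_congr rfl fun j _ => ?_
        rw [Finset.mul_sum, Finset.sum_mul, ← Finset.sum_sub_distrib]
    _ = ∑ j, ∑ l ∈ univ.filter (fun l => j < l),
          ((((nCO j : ℝ) / n j) * τc j * (nCO l : ℝ)
              - ((nCO l : ℝ) / n l) * ((nCO j : ℝ) * τc j))
            + (((nCO l : ℝ) / n l) * τc l * (nCO j : ℝ)
              - ((nCO j : ℝ) / n j) * ((nCO l : ℝ) * τc l))) := by
        apply pair_sum
        intro j; ring
    _ = ∑ j, ∑ l ∈ univ.filter (fun l => j < l),
          ((nCO j : ℝ) * nCO l / ((n j : ℝ) * n l)) * ((n l : ℝ) - n j) * (τc j - τc l) := by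
        refine Finset.sum_congr rfl fun j _ => Finset.sum_congr rfl fun l _ => ?_
        have h1 := hn0 j
        have h2 := hn0 l
        field_simp
        ring
end

section
/- The bias of the TSLS identified value admits the exact pairwise decomposition: τ_TSLS − τ = [ Σ_{1 ≤ j < l ≤ J} n_CO,j n_CO,l (n_l − n_j)(τ_j − τ_l) ] / [ (Σ_{l=1}^J n_CO,l (n − n_l)) · (Σ_{l=1}^J n_CO,l) ]. -/
/-!
Cross-multiplying, the numerator of `τ_TSLS − τ` is `Σ_j Σ_l n_CO,j n_CO,l τ_j (n_l − n_j)`, in which the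
total `n` cancels; grouping the terms `(j, l)` and `(l, j)` gives the pairwise form. Both
denominators are positive because every `n_l` is strictly smaller than `n` once `J ≥ 2`.
-/

open Finset

theorem Finset.sum_sum_filter_lt_add_swap {ι M : Type*} [Fintype ι] [LinearOrder ι]
    [AddCommMonoid M] (f : ι → ι → M) (hf : ∀ j, f j j = 0) :
    ∑ j, ∑ l ∈ univ.filter (fun l => j < l), (f j l + f l j) = ∑ j, ∑ l, f j l := by
  have hswap : ∑ j, ∑ l ∈ univ.filter (fun l => j < l), f l j =
      ∑ j, ∑ l ∈ univ.filter (fun l => l < j), f j l :=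
    sum_comm' (fun _ _ => by simp)
  have hsplit : ∀ j, ∑ l, f j l =
      ∑ l ∈ univ.filter (fun l => j < l), f j l + ∑ l ∈ univ.filter (fun l => l < j), f j l := by
    intro j
    rw [sum_filter, sum_filter, ← sum_add_distrib]
    refine sum_congr rfl fun l _ => ?_
    rcases lt_trichotomy j l with h | rfl | h
    · simp [h, h.not_gt]
    · simp [hf]
    · simp [h, h.not_gt]
  simp only [sum_add_distrib, hswap, hsplit]

theorem weighted_sums_cross_mul_sub {ι R : Type*} [Fintype ι] [CommRing R]
    (c n x : ι → R) (N : R) :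
    (∑ j, c j * (N - n j) * x j) * ∑ l, c l - (∑ l, c l * (N - n l)) * ∑ j, c j * x j =
      ∑ j, ∑ l, c j * c l * x j * (n l - n j) := by
  rw [mul_comm (∑ l, c l * (N - n l)), sum_mul_sum, sum_mul_sum, ← sum_sub_distrib]
  refine sum_congr rfl fun j _ => ?_
  rw [← sum_sub_distrib]
  exact sum_congr rfl fun l _ => by ring

theorem sum_mul_sum_sub_self_pos {ι R : Type*} [Fintype ι] [Nontrivial ι] [CommRing R] [LinearOrder R]
    [IsStrictOrderedRing R] {c n : ι → R} (hc : ∀ j, 0 < c j) (hn : ∀ j, 0 < n j) :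
    0 < ∑ l, c l * (∑ j, n j - n l) := by
  refine sum_pos (fun l _ => mul_pos (hc l) (sub_pos.2 ?_)) univ_nonempty
  obtain ⟨m, hm⟩ := exists_ne l
  exact single_lt_sum hm (mem_univ l) (mem_univ m) (hn m) fun k _ _ => (hn k).le

/-- Exact pairwise decomposition of the bias of the TSLS identified value:
`τ_TSLS − τ = [Σ_{j<l} n_CO,j n_CO,l (n_l − n_j)(τ_j − τ_l)] /
[(Σ_l n_CO,l (n − n_l))(Σ_l n_CO,l)]`. -/
theorem stmt5
    (J : ℕ) (hJ : 2 ≤ J)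
    (n nCO : Fin J → ℕ) (hn : ∀ j, 1 ≤ n j) (hCO : ∀ j, 1 ≤ nCO j)
    (τc : Fin J → ℝ)
    (N : ℕ) (hN : N = ∑ j, n j)
    (τ τTSLS : ℝ)
    (hτ : τ = (∑ j, (nCO j : ℝ) * τc j) / (∑ j, (nCO j : ℝ)))
    (hτTSLS : τTSLS = (∑ j, (nCO j : ℝ) * ((N : ℝ) - n j) * τc j) /
      (∑ j, (nCO j : ℝ) * ((N : ℝ) - n j))) :
    τTSLS - τ =
      (∑ j, ∑ l ∈ univ.filter (fun l => j < l),
          (nCO j : ℝ) * nCO l * ((n l : ℝ) - n j) * (τc j - τc l)) /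
        ((∑ l, (nCO l : ℝ) * ((N : ℝ) - n l)) * (∑ l, (nCO l : ℝ))) := by
  have : Nontrivial (Fin J) := Fin.nontrivial_iff_two_le.2 hJ
  have hc : ∀ j, (0 : ℝ) < nCO j := fun j => by exact_mod_cast hCO j
  have hC : (0 : ℝ) < ∑ l, (nCO l : ℝ) := sum_pos (fun l _ => hc l) univ_nonempty
  have hB : (0 : ℝ) < ∑ l, (nCO l : ℝ) * ((N : ℝ) - n l) := by
    rw [hN, Nat.cast_sum]
    exact sum_mul_sum_sub_self_pos hc fun j => by exact_mod_cast hn j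
  rw [hτ, hτTSLS, div_sub_div _ _ hB.ne' hC.ne', weighted_sums_cross_mul_sub,
    ← sum_sum_filter_lt_add_swap _ fun j => by ring]
  congr 1
  exact sum_congr rfl fun j _ => sum_congr rfl fun l _ => by ring
end

section
/- Suppose the number of clusters J → ∞ with cluster sizes bounded: i.e., fix infinite sequences n_j ∈ {1,…,B}, n_CO,j ∈ {1,…,n_j}, τ_j ∈ ℝ with |τ_j| ≤ C, and let p_j = n_CO,j/n_j. Assume the limits p̄ = lim_{J→∞} (1/J)Σ_{j=1}^J p_j > 0, n̄ = lim_{J→∞} (1/J)Σ_{j=1}^J n_CO,j, and L = lim_{J→∞} (1/J²) Σ_{1 ≤ j < l ≤ J} p_j p_l (n_l − n_j)(τ_j − τ_l) exist. Then the cluster-level identified value satisfies lim_{J→∞} ( τ_CL(J) − τ(J) ) = L / (p̄ · n̄), where τ_CL(J) and τ(J) are computed from the first J clusters. -/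
open Finset Filter

/-!
With weights `p j` and sizes `m j = n j`, the compliers are `p j * m j`, so `τ_CL(J) - τ(J)` is a
difference of two weighted means of `τ`. Over the common denominator `(Σ p) (Σ p m)` its
numerator is exactly the pairwise sum `Σ_{j<l} p_j p_l (m_l - m_j) (τ_j - τ_l)`; dividing
numerator and denominator by `J²` turns all three into the given Cesàro limits.
-/

theorem sum_range_filter_lt_mul_sub_mul_sub {R : Type*} [CommRing R] (p m t : ℕ → R) (J : ℕ) :
    ∑ j ∈ range J, ∑ l ∈ (range J).filter (fun l => j < l),
        p j * p l * (m l - m j) * (t j - t l)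
      = (∑ j ∈ range J, p j * t j) * (∑ j ∈ range J, p j * m j)
        - (∑ j ∈ range J, p j * m j * t j) * ∑ j ∈ range J, p j := by
  induction J with
  | zero => simp
  | succ J ih =>
    have hfilter : ∀ j ∈ range J, (range (J + 1)).filter (fun l => j < l)
        = insert J ((range J).filter (fun l => j < l)) := fun j hj => by
      rw [range_add_one, filter_insert, if_pos (mem_range.mp hj)]
    have hlast : (range (J + 1)).filter (fun l => J < l) = ∅ :=
      filter_false_of_mem fun l hl => by simpa using mem_range.mp hl
    rw [sum_range_succ, hlast, sum_empty, add_zero,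
      sum_congr rfl fun j hj => by rw [hfilter j hj, sum_insert (by simp)],
      sum_add_distrib, ih]
    have hnew : ∑ j ∈ range J, p j * p J * (m J - m j) * (t j - t J)
        = p J * m J * ∑ j ∈ range J, p j * t j - p J * m J * t J * ∑ j ∈ range J, p j
          - p J * ∑ j ∈ range J, p j * m j * t j + p J * t J * ∑ j ∈ range J, p j * m j := by
      simp only [mul_sum, ← sum_sub_distrib, ← sum_add_distrib]
      exact sum_congr rfl fun j _ => by ring
    rw [hnew]
    simp only [sum_range_succ]
    ring

theorem le_of_tendsto_sum_range_div {a : ℕ → ℝ} {c l : ℝ} (ha : ∀ j, c ≤ a j)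
    (hl : Tendsto (fun J : ℕ => (∑ j ∈ range J, a j) / J) atTop (nhds l)) : c ≤ l := by
  refine ge_of_tendsto hl ?_
  filter_upwards [eventually_ge_atTop 1] with J hJ
  rw [le_div_iff₀ (by positivity)]
  simpa [mul_comm] using card_nsmul_le_sum (range J) a c fun j _ => ha j

theorem div_sum_sub_div_sum_eq {K : Type*} [Field K] (p m t : ℕ → K) (J : ℕ)
    (hP : ∑ j ∈ range J, p j ≠ 0) (hM : ∑ j ∈ range J, p j * m j ≠ 0) :
    (∑ j ∈ range J, p j * t j) / (∑ j ∈ range J, p j)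
        - (∑ j ∈ range J, p j * m j * t j) / (∑ j ∈ range J, p j * m j)
      = (∑ j ∈ range J, ∑ l ∈ (range J).filter (fun l => j < l),
          p j * p l * (m l - m j) * (t j - t l))
        / ((∑ j ∈ range J, p j) * ∑ j ∈ range J, p j * m j) := by
  rw [sum_range_filter_lt_mul_sub_mul_sub, div_sub_div _ _ hP hM]
  ring

theorem stmt6_general
    (n nCO : ℕ → ℕ) (τc : ℕ → ℝ)
    (hn1 : ∀ j, 1 ≤ n j)
    (hCO1 : ∀ j, 1 ≤ nCO j)
    (p : ℕ → ℝ) (hp : ∀ j, p j = (nCO j : ℝ) / n j)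
    (pbar nbar L : ℝ) (hpbar : 0 < pbar)
    (hpbarlim : Tendsto (fun J : ℕ => (∑ j ∈ Finset.range J, p j) / J) atTop (nhds pbar))
    (hnbarlim : Tendsto (fun J : ℕ => (∑ j ∈ Finset.range J, (nCO j : ℝ)) / J)
      atTop (nhds nbar))
    (hLlim : Tendsto (fun J : ℕ =>
        (∑ j ∈ Finset.range J, ∑ l ∈ (Finset.range J).filter (fun l => j < l),
          p j * p l * ((n l : ℝ) - n j) * (τc j - τc l)) / (J : ℝ) ^ 2)
      atTop (nhds L))
    (τ τCL : ℕ → ℝ)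
    (hτ : ∀ J, τ J = (∑ j ∈ Finset.range J, (nCO j : ℝ) * τc j) /
      (∑ j ∈ Finset.range J, (nCO j : ℝ)))
    (hτCL : ∀ J, τCL J = (∑ j ∈ Finset.range J, p j * τc j) /
      (∑ j ∈ Finset.range J, p j)) :
    Tendsto (fun J : ℕ => τCL J - τ J) atTop (nhds (L / (pbar * nbar))) := by
  have hCOpos (j : ℕ) : (0 : ℝ) < nCO j := by exact_mod_cast hCO1 j
  have hnpos (j : ℕ) : (0 : ℝ) < n j := by exact_mod_cast hn1 j
  have hppos (j : ℕ) : 0 < p j := by rw [hp j]; exact div_pos (hCOpos j) (hnpos j)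
  have hpn (j : ℕ) : p j * n j = nCO j := by rw [hp j, div_mul_cancel₀ _ (hnpos j).ne']
  have hnbar : 1 ≤ nbar :=
    le_of_tendsto_sum_range_div (fun j => by exact_mod_cast hCO1 j) hnbarlim
  refine (hLlim.div (hpbarlim.mul hnbarlim) (by positivity)).congr' ?_
  filter_upwards [eventually_ge_atTop 1] with J hJ
  have hJne : (range J).Nonempty := nonempty_range_iff.mpr (by omega)
  have hP : 0 < ∑ j ∈ range J, p j := sum_pos (fun j _ => hppos j) hJne
  have hN : 0 < ∑ j ∈ range J, (nCO j : ℝ) := sum_pos (fun j _ => hCOpos j) hJne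
  simp only [Pi.div_apply]
  simp_rw [hτCL, hτ, ← hpn] at hN ⊢
  rw [div_sum_sub_div_sum_eq _ _ _ _ hP.ne' hN.ne']
  field_simp

/-- Growing number of clusters with bounded cluster sizes: if the average complier
proportion, the average number of compliers, and the normalized pairwise-bias sum all
converge (with positive limiting average proportion), then
`τ_CL(J) − τ(J) → L / (p̄ · n̄)`. -/
theorem stmt6
    (B : ℕ) (C : ℝ)
    (n nCO : ℕ → ℕ) (τc : ℕ → ℝ)
    (hn1 : ∀ j, 1 ≤ n j) (hnB : ∀ j, n j ≤ B)
    (hCO1 : ∀ j, 1 ≤ nCO j) (hCOn : ∀ j, nCO j ≤ n j)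
    (hτb : ∀ j, |τc j| ≤ C)
    (p : ℕ → ℝ) (hp : ∀ j, p j = (nCO j : ℝ) / n j)
    (pbar nbar L : ℝ) (hpbar : 0 < pbar)
    (hpbarlim : Tendsto (fun J : ℕ => (∑ j ∈ Finset.range J, p j) / J) atTop (nhds pbar))
    (hnbarlim : Tendsto (fun J : ℕ => (∑ j ∈ Finset.range J, (nCO j : ℝ)) / J)
      atTop (nhds nbar))
    (hLlim : Tendsto (fun J : ℕ =>
        (∑ j ∈ Finset.range J, ∑ l ∈ (Finset.range J).filter (fun l => j < l),
          p j * p l * ((n l : ℝ) - n j) * (τc j - τc l)) / (J : ℝ) ^ 2)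
      atTop (nhds L))
    (τ τCL : ℕ → ℝ)
    (hτ : ∀ J, τ J = (∑ j ∈ Finset.range J, (nCO j : ℝ) * τc j) /
      (∑ j ∈ Finset.range J, (nCO j : ℝ)))
    (hτCL : ∀ J, τCL J = (∑ j ∈ Finset.range J, p j * τc j) /
      (∑ j ∈ Finset.range J, p j)) :
    Tendsto (fun J : ℕ => τCL J - τ J) atTop (nhds (L / (pbar * nbar))) :=
  stmt6_general n nCO τc hn1 hCO1 p hp pbar nbar L hpbar hpbarlim hnbarlim hLlim τ τCL hτ hτCL
end

section
/- The O(1/J) rate for the TSLS identified value is sharp: there is a constant c > 0 such that for every J ≥ 2 there exists a configuration with cluster sizes n_j ∈ {1, 2}, one complier per cluster (n_CO,j = 1), and cluster-level CACEs τ_j ∈ {0, 1}, for which |τ_TSLS − τ| ≥ c/J. -/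
open Finset

lemma sum_ite_lt_const (J k : ℕ) (hkJ : k ≤ J) (a b : ℝ) :
    ∑ j : Fin J, (if (j : ℕ) < k then a else b) = k * a + ((J : ℝ) - k) * b := by
  rw [Finset.sum_ite, Finset.sum_const, Finset.sum_const]
  have hcard : (univ.filter fun j : Fin J => (j : ℕ) < k).card = k := by
    rcases eq_or_lt_of_le hkJ with h | h
    · subst h
      rw [Finset.filter_true_of_mem (fun j _ => j.isLt), Finset.card_univ, Fintype.card_fin]
    · have : (univ.filter fun j : Fin J => (j : ℕ) < k) = Iio ⟨k, h⟩ := by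
        ext j; simp [Fin.lt_def]
      rw [this, Fin.card_Iio]
  have hcard' : (univ.filter fun j : Fin J => ¬ (j : ℕ) < k).card = J - k := by
    rw [Finset.filter_not, Finset.card_sdiff_of_subset (Finset.filter_subset _ _), hcard,
      Finset.card_univ, Fintype.card_fin]
  rw [hcard, hcard', nsmul_eq_mul, nsmul_eq_mul, Nat.cast_sub hkJ]

/-- Sharpness of the `O(1/J)` rate for the TSLS identified value: there is `c > 0` such
that for every `J ≥ 2` there is a configuration with cluster sizes in `{1,2}`, one
complier per cluster, and cluster CACEs in `{0,1}` with `|τ_TSLS − τ| ≥ c/J`. -/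
theorem stmt8 :
    ∃ c : ℝ, 0 < c ∧ ∀ J : ℕ, 2 ≤ J →
      ∃ (n : Fin J → ℕ) (τc : Fin J → ℝ),
        (∀ j, n j = 1 ∨ n j = 2) ∧ (∀ j, τc j = 0 ∨ τc j = 1) ∧
        (let nCO : Fin J → ℕ := fun _ => 1
         let N : ℝ := ∑ j, (n j : ℝ)
         let τ : ℝ := (∑ j, (nCO j : ℝ) * τc j) / (∑ j, (nCO j : ℝ))
         let τTSLS : ℝ := (∑ j, (nCO j : ℝ) * (N - n j) * τc j) /
           (∑ j, (nCO j : ℝ) * (N - n j))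
         c / J ≤ |τTSLS - τ|) := by
  refine ⟨1/16, by norm_num, fun J hJ => ?_⟩
  set k : ℕ := J / 2 with hk
  have hk1 : 1 ≤ k := by omega
  have hkJ : k < J := by omega
  have h2k : 2 * k ≤ J := by omega
  have h2k' : J ≤ 2 * k + 1 := by omega
  refine ⟨fun j => if (j : ℕ) < k then 2 else 1, fun j => if (j : ℕ) < k then 1 else 0,
    fun j => by dsimp only; split <;> simp, fun j => by dsimp only; split <;> simp, ?_⟩
  intro nCO N τ τTSLS
  have hb2 : (2 : ℝ) ≤ (J : ℝ) := by exact_mod_cast hJ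
  have ha1 : (1 : ℝ) ≤ (k : ℝ) := by exact_mod_cast hk1
  have h2kR : 2 * (k : ℝ) ≤ J := by exact_mod_cast h2k
  have h2kR' : (J : ℝ) ≤ 2 * k + 1 := by exact_mod_cast h2k'
  have hN : N = (J : ℝ) + k := by
    show (∑ j : Fin J, (((if (j : ℕ) < k then 2 else 1 : ℕ)) : ℝ)) = _
    have e1 : ∀ j ∈ (univ : Finset (Fin J)),
        (((if (j : ℕ) < k then 2 else 1 : ℕ)) : ℝ) = if (j : ℕ) < k then (2:ℝ) else 1 :=
      fun j _ => by split <;> simp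
    rw [Finset.sum_congr rfl e1, sum_ite_lt_const J k hkJ.le]; ring
  have hτ : τ = (k : ℝ) / J := by
    show (∑ j : Fin J, ((1:ℕ) : ℝ) * (if (j : ℕ) < k then (1:ℝ) else 0)) /
      (∑ _j : Fin J, ((1:ℕ) : ℝ)) = _
    have e2 : ∀ j ∈ (univ : Finset (Fin J)),
        ((1:ℕ) : ℝ) * (if (j : ℕ) < k then (1:ℝ) else 0)
          = if (j : ℕ) < k then (1:ℝ) else 0 := fun j _ => by rw [Nat.cast_one, one_mul]
    rw [Finset.sum_congr rfl e2, sum_ite_lt_const J k hkJ.le, Finset.sum_const,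
      Finset.card_univ, Fintype.card_fin, nsmul_eq_mul, Nat.cast_one, mul_one]
    ring_nf
  have hτT : τTSLS = (k : ℝ) * (N - 2) / (((J : ℝ) - 1) * N) := by
    show (∑ j : Fin J, ((1:ℕ) : ℝ) * (N - ((if (j : ℕ) < k then 2 else 1 : ℕ) : ℝ)) *
        (if (j : ℕ) < k then (1:ℝ) else 0)) /
      (∑ j : Fin J, ((1:ℕ) : ℝ) * (N - ((if (j : ℕ) < k then 2 else 1 : ℕ) : ℝ))) = _
    have e3 : ∀ j ∈ (univ : Finset (Fin J)),
        ((1:ℕ) : ℝ) * (N - ((if (j : ℕ) < k then 2 else 1 : ℕ) : ℝ)) *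
          (if (j : ℕ) < k then (1:ℝ) else 0)
          = if (j : ℕ) < k then N - 2 else 0 := fun j _ => by split <;> simp
    have e4 : ∀ j ∈ (univ : Finset (Fin J)),
        ((1:ℕ) : ℝ) * (N - ((if (j : ℕ) < k then 2 else 1 : ℕ) : ℝ))
          = if (j : ℕ) < k then N - 2 else N - 1 := fun j _ => by split <;> simp
    rw [Finset.sum_congr rfl e3, Finset.sum_congr rfl e4,
      sum_ite_lt_const J k hkJ.le, sum_ite_lt_const J k hkJ.le, hN]
    congr 1 <;> ring
  have hNpos : (0:ℝ) < N := by rw [hN]; linarith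
  have hJ1 : (0:ℝ) < (J:ℝ) - 1 := by linarith
  have hJpos : (0:ℝ) < (J:ℝ) := by linarith
  have hJk : (k:ℝ) ≤ (J:ℝ) - k := by linarith
  have hdiff : τTSLS - τ = -((k:ℝ) * ((J:ℝ) - k) / ((J:ℝ) * ((J:ℝ)-1) * ((J:ℝ)+k))) := by
    rw [hτ, hτT, hN]
    field_simp
    ring
  have hdpos : (0:ℝ) < (k:ℝ) * ((J:ℝ) - k) / ((J:ℝ) * ((J:ℝ)-1) * ((J:ℝ)+k)) := by
    apply div_pos
    · apply mul_pos <;> linarith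
    · apply mul_pos (mul_pos hJpos hJ1); linarith
  rw [hdiff, abs_neg, abs_of_pos hdpos]
  rw [div_le_div_iff₀ hJpos (by apply mul_pos (mul_pos hJpos hJ1); linarith)]
  nlinarith [mul_pos hJpos hJ1, sq_nonneg ((J:ℝ) - 2*k), mul_le_mul_of_nonneg_left hJk (le_trans zero_le_one ha1)]
end

section
/- Fix the number of clusters J ≥ 2 and consider a sequence of populations indexed by t ∈ ℕ in which, for every j, n_j(t) → ∞, n_CO,j(t)/n_j(t) → p_j ∈ (0,1), n_l(t)/n_j(t) → ρ_lj ∈ [0,∞) for every l ≠ j, and τ_j(t) → τ_{j,∞}. Then the cluster-level identified value satisfies lim_{t→∞} ( τ_CL(t) − τ(t) ) = Σ_{j=1}^J τ_{j,∞} · [ Σ_{l ≠ j} p_j p_l (ρ_lj − 1) ] / [ (Σ_{l=1}^J p_l) · ( p_j + Σ_{l ≠ j} ρ_lj p_l ) ]. -/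
/-!
Both identified values are weighted averages of the cluster effects `τ_j`, so their difference is
`Σ_j τ_j (a_j / Σ a - c_j / Σ c)` with `a_j = n_CO,j / n_j` and `c_j = n_CO,j`. The first share tends
to `p_j / Σ_l p_l`. Dividing numerator and denominator of the second one by `n_j` writes it as
`(c_j / n_j) / Σ_l (c_l / n_l) (n_l / n_j)`, which tends to `p_j / (p_j + Σ_{l ≠ j} ρ_lj p_l)`.
-/

open Finset Filter Topology

section Algebra

variable {ι K : Type*} [Fintype ι] [Field K]

theorem sum_mul_div_sum_sub_sum_mul_div_sum (a c x : ι → K) :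
    (∑ i, a i * x i) / ∑ i, a i - (∑ i, c i * x i) / ∑ i, c i =
      ∑ i, x i * (a i / ∑ k, a k - c i / ∑ k, c k) := by
  simp only [mul_sub, sum_sub_distrib, sum_div]
  congr 1 <;> exact sum_congr rfl fun i _ => by ring

theorem div_sum_eq_div_div_sum_mul_div (c n : ι → K) (hn : ∀ i, n i ≠ 0) (j : ι) :
    c j / ∑ i, c i = (c j / n j) / ∑ i, c i / n i * (n i / n j) := by
  have hsum : ∑ i, c i / n i * (n i / n j) = (∑ i, c i) / n j := by
    rw [sum_div]
    exact sum_congr rfl fun i _ => div_mul_div_cancel₀ (hn i)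
  rw [hsum, div_div_div_cancel_right₀ (hn j)]

variable [DecidableEq ι]

theorem div_sum_sub_div_add_sum_erase (p : ι → K) (ρ : ι → ι → K) (j : ι)
    (hP : ∑ l, p l ≠ 0) (hD : p j + ∑ l ∈ univ.erase j, ρ l j * p l ≠ 0) :
    p j / ∑ l, p l - p j / (p j + ∑ l ∈ univ.erase j, ρ l j * p l) =
      (∑ l ∈ univ.erase j, p j * p l * (ρ l j - 1)) /
        ((∑ l, p l) * (p j + ∑ l ∈ univ.erase j, ρ l j * p l)) := by
  have hnum : ∑ l ∈ univ.erase j, p j * p l * (ρ l j - 1) =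
      p j * ((p j + ∑ l ∈ univ.erase j, ρ l j * p l) - ∑ l, p l) := by
    rw [← add_sum_erase univ p (mem_univ j), add_sub_add_left_eq_sub, ← sum_sub_distrib, mul_sum]
    exact sum_congr rfl fun l _ => by ring
  rw [hnum, div_sub_div _ _ hP hD]
  ring

end Algebra

theorem tendsto_div_sum_of_tendsto_ratios {ι α : Type*} [Fintype ι] [DecidableEq ι]
    {F : Filter α} {c n : α → ι → ℝ} {p : ι → ℝ} {ρ : ι → ι → ℝ} (hn : ∀ t i, n t i ≠ 0)
    (hp : ∀ i, Tendsto (fun t => c t i / n t i) F (𝓝 (p i)))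
    (hρ : ∀ l j, l ≠ j → Tendsto (fun t => n t l / n t j) F (𝓝 (ρ l j)))
    (j : ι) (hD : p j + ∑ l ∈ univ.erase j, ρ l j * p l ≠ 0) :
    Tendsto (fun t => c t j / ∑ i, c t i) F
      (𝓝 (p j / (p j + ∑ l ∈ univ.erase j, ρ l j * p l))) := by
  have hden : Tendsto (fun t => c t j / n t j + ∑ l ∈ univ.erase j, c t l / n t l * (n t l / n t j))
      F (𝓝 (p j + ∑ l ∈ univ.erase j, ρ l j * p l)) :=
    (hp j).add <| tendsto_finsetSum _ fun l hl => by
      simpa only [mul_comm (ρ l j)] using (hp l).mul (hρ l j (ne_of_mem_erase hl))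
  refine ((hp j).div hden hD).congr fun t => ?_
  rw [div_sum_eq_div_div_sum_mul_div _ _ (hn t) j, ← add_sum_erase univ _ (mem_univ j),
    div_self (hn t j), mul_one, Pi.div_apply]

theorem stmt9_general
    (J : ℕ)
    (n nCO : ℕ → Fin J → ℕ) (τc : ℕ → Fin J → ℝ)
    (hn1 : ∀ t j, 1 ≤ n t j)
    (p : Fin J → ℝ) (hp : ∀ j, 0 < p j ∧ p j < 1)
    (ρ : Fin J → Fin J → ℝ) (hρ : ∀ l j, 0 ≤ ρ l j)
    (τinf : Fin J → ℝ)
    (hplim : ∀ j, Tendsto (fun t : ℕ => (nCO t j : ℝ) / n t j) atTop (nhds (p j)))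
    (hρlim : ∀ l j, l ≠ j →
      Tendsto (fun t : ℕ => (n t l : ℝ) / n t j) atTop (nhds (ρ l j)))
    (hτlim : ∀ j, Tendsto (fun t : ℕ => τc t j) atTop (nhds (τinf j)))
    (τ τCL : ℕ → ℝ)
    (hτ : ∀ t, τ t = (∑ j, (nCO t j : ℝ) * τc t j) / (∑ j, (nCO t j : ℝ)))
    (hτCL : ∀ t, τCL t = (∑ j, ((nCO t j : ℝ) / n t j) * τc t j) /
      (∑ j, (nCO t j : ℝ) / n t j)) :
    Tendsto (fun t : ℕ => τCL t - τ t) atTop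
      (nhds (∑ j, τinf j *
        (∑ l ∈ univ.filter (fun l => l ≠ j), p j * p l * (ρ l j - 1)) /
        ((∑ l, p l) * (p j + ∑ l ∈ univ.filter (fun l => l ≠ j), ρ l j * p l)))) := by
  have hn : ∀ t j, (n t j : ℝ) ≠ 0 := fun t j => by
    have := hn1 t j
    positivity
  have hP : ∀ j : Fin J, 0 < ∑ l, p l := fun j => sum_pos (fun l _ => (hp l).1) ⟨j, mem_univ j⟩
  have hD : ∀ j, 0 < p j + ∑ l ∈ univ.erase j, ρ l j * p l := fun j =>
    add_pos_of_pos_of_nonneg (hp j).1 (sum_nonneg fun l _ => mul_nonneg (hρ l j) (hp l).1.le)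
  simp_rw [hτCL, hτ, sum_mul_div_sum_sub_sum_mul_div_sum, filter_ne']
  refine tendsto_finsetSum _ fun j _ => ?_
  rw [mul_div_assoc, ← div_sum_sub_div_add_sum_erase _ _ _ (hP j).ne' (hD j).ne']
  exact (hτlim j).mul (((hplim j).div (tendsto_finsetSum _ fun l _ => hplim l) (hP j).ne').sub
    (tendsto_div_sum_of_tendsto_ratios hn hplim hρlim j (hD j).ne'))

/-- Fixed number of clusters with growing cluster sizes: the limiting bias of the
cluster-level identified value is
`Σ_j τ_{j,∞} [Σ_{l≠j} p_j p_l (ρ_lj − 1)] / [(Σ_l p_l)(p_j + Σ_{l≠j} ρ_lj p_l)]`. -/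
theorem stmt9
    (J : ℕ) (hJ : 2 ≤ J)
    (n nCO : ℕ → Fin J → ℕ) (τc : ℕ → Fin J → ℝ)
    (hn1 : ∀ t j, 1 ≤ n t j) (hCO1 : ∀ t j, 1 ≤ nCO t j)
    (p : Fin J → ℝ) (hp : ∀ j, 0 < p j ∧ p j < 1)
    (ρ : Fin J → Fin J → ℝ) (hρ : ∀ l j, 0 ≤ ρ l j)
    (τinf : Fin J → ℝ)
    (hngrow : ∀ j, Tendsto (fun t : ℕ => (n t j : ℝ)) atTop atTop)
    (hplim : ∀ j, Tendsto (fun t : ℕ => (nCO t j : ℝ) / n t j) atTop (nhds (p j)))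
    (hρlim : ∀ l j, l ≠ j →
      Tendsto (fun t : ℕ => (n t l : ℝ) / n t j) atTop (nhds (ρ l j)))
    (hτlim : ∀ j, Tendsto (fun t : ℕ => τc t j) atTop (nhds (τinf j)))
    (τ τCL : ℕ → ℝ)
    (hτ : ∀ t, τ t = (∑ j, (nCO t j : ℝ) * τc t j) / (∑ j, (nCO t j : ℝ)))
    (hτCL : ∀ t, τCL t = (∑ j, ((nCO t j : ℝ) / n t j) * τc t j) /
      (∑ j, (nCO t j : ℝ) / n t j)) :
    Tendsto (fun t : ℕ => τCL t - τ t) atTop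
      (nhds (∑ j, τinf j *
        (∑ l ∈ univ.filter (fun l => l ≠ j), p j * p l * (ρ l j - 1)) /
        ((∑ l, p l) * (p j + ∑ l ∈ univ.filter (fun l => l ≠ j), ρ l j * p l)))) :=
  stmt9_general J n nCO τc hn1 p hp ρ hρ τinf hplim hρlim hτlim τ τCL hτ hτCL
end

section
/- Under monotonicity and the exclusion restriction, if the homogeneity null hypothesis H_00 holds, i.e. τ_j = τ_0 for every cluster j, then the adjusted cluster responses are invariant to treatment assignment: A_j^(1)(τ_0) = A_j^(0)(τ_0) for every j, where A_j^(z)(τ_0) = Σ_i Y_ji^(D_ji^(z)) − τ_0 Σ_i D_ji^(z) for z ∈ {0,1}. -/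
open Finset

/-- Under monotonicity and the exclusion restriction, if the homogeneity null `H_00`
(`τ_j = τ_0` for every cluster) holds, then the adjusted cluster responses are invariant
to treatment assignment: `A_j^(1)(τ_0) = A_j^(0)(τ_0)` for every cluster `j`. -/
theorem stmt13
    (J : ℕ) (n : Fin J → ℕ) (hn : ∀ j, 1 ≤ n j)
    -- potential compliances and potential outcomes (exclusion restriction:
    -- outcomes depend only on the treatment received)
    (D1 D0 : (j : Fin J) → Fin (n j) → Bool)
    (Y : (j : Fin J) → Fin (n j) → Bool → ℝ)
    -- monotonicity: no defiers
    (mono : ∀ j i, D0 j i = true → D1 j i = true)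
    (nCO : Fin J → ℕ)
    (hnCO : ∀ j, nCO j =
      (univ.filter (fun i => D1 j i = true ∧ D0 j i = false)).card)
    (hnCO1 : ∀ j, 1 ≤ nCO j)
    -- cluster-level CACEs
    (τc : Fin J → ℝ)
    (hτc : ∀ j, τc j =
      (∑ i ∈ univ.filter (fun i => D1 j i = true ∧ D0 j i = false),
        (Y j i true - Y j i false)) / nCO j)
    -- the homogeneity null hypothesis H_00
    (τ0 : ℝ) (H00 : ∀ j, τc j = τ0)
    -- adjusted cluster responses under treatment and control
    (A1 A0 : Fin J → ℝ)
    (hA1 : ∀ j, A1 j = (∑ i, Y j i (D1 j i)) -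
      τ0 * ∑ i, (if D1 j i then (1 : ℝ) else 0))
    (hA0 : ∀ j, A0 j = (∑ i, Y j i (D0 j i)) -
      τ0 * ∑ i, (if D0 j i then (1 : ℝ) else 0)) :
    ∀ j, A1 j = A0 j := by
  intro j
  have hpos : (0 : ℝ) < (nCO j : ℝ) := by
    exact_mod_cast Nat.lt_of_lt_of_le Nat.zero_lt_one (hnCO1 j)
  have key : ∑ i ∈ univ.filter (fun i => D1 j i = true ∧ D0 j i = false),
      (Y j i true - Y j i false) = τ0 * nCO j := by
    have h := (hτc j).symm.trans (H00 j)
    rw [div_eq_iff (ne_of_gt hpos)] at h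
    exact h
  rw [hA1 j, hA0 j]
  have expand : (∑ i, Y j i (D1 j i)) - τ0 * ∑ i, (if D1 j i then (1:ℝ) else 0)
      - ((∑ i, Y j i (D0 j i)) - τ0 * ∑ i, (if D0 j i then (1:ℝ) else 0))
      = ∑ i, ((Y j i (D1 j i) - Y j i (D0 j i))
          - τ0 * ((if D1 j i then (1:ℝ) else 0) - (if D0 j i then (1:ℝ) else 0))) := by
    simp only [Finset.sum_sub_distrib, mul_sub, Finset.mul_sum]
    ring
  have split : ∑ i, ((Y j i (D1 j i) - Y j i (D0 j i))
          - τ0 * ((if D1 j i then (1:ℝ) else 0) - (if D0 j i then (1:ℝ) else 0))) = 0 := by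
    rw [← Finset.sum_filter_add_sum_filter_not univ (fun i => D1 j i = true ∧ D0 j i = false)]
    have h1 : ∑ i ∈ univ.filter (fun i => D1 j i = true ∧ D0 j i = false),
        ((Y j i (D1 j i) - Y j i (D0 j i))
          - τ0 * ((if D1 j i then (1:ℝ) else 0) - (if D0 j i then (1:ℝ) else 0)))
        = ∑ i ∈ univ.filter (fun i => D1 j i = true ∧ D0 j i = false),
            ((Y j i true - Y j i false) - τ0) := by
      apply Finset.sum_congr rfl
      intro i hi
      simp only [Finset.mem_filter] at hi
      rw [hi.2.1, hi.2.2]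
      simp
    have h2 : ∑ i ∈ univ.filter (fun i => ¬(D1 j i = true ∧ D0 j i = false)),
        ((Y j i (D1 j i) - Y j i (D0 j i))
          - τ0 * ((if D1 j i then (1:ℝ) else 0) - (if D0 j i then (1:ℝ) else 0))) = 0 := by
      apply Finset.sum_eq_zero
      intro i hi
      simp only [Finset.mem_filter] at hi
      have heq : D1 j i = D0 j i := by
        rcases Bool.eq_false_or_eq_true (D0 j i) with h0 | h0
        · rw [h0, mono j i h0]
        · rcases Bool.eq_false_or_eq_true (D1 j i) with h1 | h1
          · exact absurd ⟨h1, h0⟩ hi.2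
          · rw [h0, h1]

      rw [heq]
      ring
    rw [h1, h2, Finset.sum_sub_distrib, key, Finset.sum_const, hnCO j]
    simp [mul_comm]
  linarith [expand, split]
end
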